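/- For a point p in the plane and a simple (non-self-intersecting) polygon, if the horizontal ray from p to the right crosses the polygon boundary in an odd number of points (none of which is a vertex), then p lies in the interior of the polygon. -/

import Mathlib

open Set

/-- The boundary of a polygon with vertices `v 0, v 1, …, v (n-1)` listed cyclically:
the union of the edges (closed segments between consecutive vertices). -/
def polyBoundary (n : ℕ) [NeZero n] (v : Fin n → ℝ × ℝ) : Set (ℝ × ℝ) :=
  ⋃ i : Fin n, segment ℝ (v i) (v (i + 1))

/-- A polygon is simple (non-self-intersecting) if its vertices are distinct and
two distinct edges meet only in vertices of the polygon. -/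
def IsSimplePolygon (n : ℕ) [NeZero n] (v : Fin n → ℝ × ℝ) : Prop :=
  Function.Injective v ∧
  ∀ i j : Fin n, i ≠ j →
    segment ℝ (v i) (v (i + 1)) ∩ segment ℝ (v j) (v (j + 1)) ⊆ Set.range v

/-- The open horizontal ray going right from `p`. -/
def rightRay (p : ℝ × ℝ) : Set (ℝ × ℝ) := {q : ℝ × ℝ | q.2 = p.2 ∧ p.1 < q.1}

/-!
Count the edges crossed by the horizontal ray from a point `q`, with a half-open convention at
endpoints. The parity of this count is locally constant off the boundary: near `q₀`, the term of
an edge changes only through an endpoint at the height of `q₀` and to its right, and such a vertex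
makes the terms of both of its edges jump together as `q` drops below that height, so the jumps
cancel. Far from the polygon the parity is `0`. At `p`, since no vertex lies on the ray and
distinct edges meet only at vertices, distinct crossing edges give distinct crossing points, so
the parity is that of the number of crossings, i.e. `1`. Hence the component of `p` stays in a
bounded region.
-/

open Filter Topology

theorem apply_eq_of_mem_connectedComponentIn {X Y : Type*} [TopologicalSpace X] {U : Set X}
    {f : X → Y} (hf : ∀ x ∈ U, ∀ᶠ y in 𝓝 x, f y = f x) {x y : X}
    (hy : y ∈ connectedComponentIn U x) : f y = f x := by
  let _ : TopologicalSpace Y := ⊥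
  have : DiscreteTopology Y := ⟨rfl⟩
  have hx : x ∈ U := connectedComponentIn_nonempty_iff.1 ⟨y, hy⟩
  have hcont : ContinuousOn f U := fun z hz =>
    ContinuousAt.continuousWithinAt <| by
      rw [ContinuousAt, nhds_discrete Y, tendsto_pure]
      exact hf z hz
  exact isPreconnected_connectedComponentIn.constant
    (hcont.mono (connectedComponentIn_subset U x)) hy (mem_connectedComponentIn hx)

theorem Fin.sum_add_succ_eq_zero {R : Type*} [Ring R] [CharP R 2] {n : ℕ} [NeZero n]
    (f : Fin n → R) :
    ∑ i, (f i + f (i + 1)) = 0 := by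
  rw [Finset.sum_add_distrib,
    Fintype.sum_equiv (Equiv.addRight 1) (fun i => f (i + 1)) f (fun _ => rfl),
    CharTwo.add_self_eq_zero]

theorem mem_uIcc_of_xor_le {a b t : ℝ} (h : Xor (a ≤ t) (b ≤ t)) : t ∈ uIcc a b := by
  rcases h with ⟨ha, hb⟩ | ⟨hb, ha⟩
  · exact mem_uIcc.2 (Or.inl ⟨ha, (not_le.1 hb).le⟩)
  · exact mem_uIcc.2 (Or.inr ⟨hb, (not_le.1 ha).le⟩)

theorem xor_le_of_mem_openSegment {a b t : ℝ} (h : a ≠ b) (ht : t ∈ openSegment ℝ a b) :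
    Xor (a ≤ t) (b ≤ t) := by
  rcases h.lt_or_gt with h | h
  · rw [openSegment_eq_Ioo h] at ht
    exact Or.inl ⟨ht.1.le, not_le.2 ht.2⟩
  · rw [openSegment_symm, openSegment_eq_Ioo h] at ht
    exact Or.inr ⟨ht.1.le, not_le.2 ht.2⟩

theorem ne_of_xor_le {a b t : ℝ} (h : Xor (a ≤ t) (b ≤ t)) : a ≠ b := by
  rintro rfl
  simp at h

theorem le_iff_le_of_notMem_uIcc {a b t : ℝ} (h : t ∉ uIcc a b) : a ≤ t ↔ b ≤ t := by
  by_contra hab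
  exact h (mem_uIcc_of_xor_le (xor_iff_not_iff _ _ |>.2 hab))

/-- The abscissa at height `t` of the line through `a` and `b`; when `a.2 = b.2` the division
by zero makes it `a.1`. -/
noncomputable def lineX (a b : ℝ × ℝ) (t : ℝ) : ℝ :=
  a.1 + (t - a.2) * (b.1 - a.1) / (b.2 - a.2)

theorem lineX_self_left (a b : ℝ × ℝ) : lineX a b a.2 = a.1 := by
  simp [lineX]

theorem lineX_self_right {a b : ℝ × ℝ} (h : a.2 ≠ b.2) : lineX a b b.2 = b.1 := by
  have : b.2 - a.2 ≠ 0 := sub_ne_zero.2 h.symm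
  unfold lineX
  field_simp
  ring

theorem continuous_lineX (a b : ℝ × ℝ) : Continuous (lineX a b) := by
  unfold lineX
  fun_prop

theorem lineX_of_mem_segment {a b z : ℝ × ℝ} (h : a.2 ≠ b.2) (hz : z ∈ segment ℝ a b) :
    lineX a b z.2 = z.1 := by
  rw [segment_eq_image'] at hz
  obtain ⟨θ, -, rfl⟩ := hz
  have : b.2 - a.2 ≠ 0 := sub_ne_zero.2 h.symm
  simp only [lineX, Prod.fst_add, Prod.snd_add, Prod.smul_fst, Prod.smul_snd, Prod.fst_sub,
    Prod.snd_sub, smul_eq_mul]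
  field_simp
  ring

theorem mk_lineX_mem_segment {a b : ℝ × ℝ} {t : ℝ} (h : a.2 ≠ b.2) (ht : t ∈ uIcc a.2 b.2) :
    (lineX a b t, t) ∈ segment ℝ a b := by
  rw [← segment_eq_uIcc, segment_eq_image'] at ht
  obtain ⟨θ, hθ, rfl⟩ := ht
  have : b.2 - a.2 ≠ 0 := sub_ne_zero.2 h.symm
  rw [segment_eq_image']
  refine ⟨θ, hθ, Prod.ext ?_ rfl⟩
  simp only [lineX, Prod.fst_add, Prod.smul_fst, Prod.fst_sub, smul_eq_mul]
  field_simp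
  ring

theorem lineX_mem_uIcc {a b : ℝ × ℝ} {t : ℝ} (h : Xor (a.2 ≤ t) (b.2 ≤ t)) :
    lineX a b t ∈ uIcc a.1 b.1 := by
  rw [← segment_eq_uIcc]
  exact (Prod.segment_subset a b (mk_lineX_mem_segment (ne_of_xor_le h) (mem_uIcc_of_xor_le h))).1

theorem mk_mem_segment_of_snd_eq {a b : ℝ × ℝ} {x t : ℝ} (ha : a.2 = t) (hb : b.2 = t)
    (hx : x ∈ uIcc a.1 b.1) : (x, t) ∈ segment ℝ a b := by
  rw [← segment_eq_uIcc] at hx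
  rw [← Prod.mk.eta (p := a), ← Prod.mk.eta (p := b), ha, hb, ← Prod.image_mk_segment_left]
  exact mem_image_of_mem _ hx

/-- Half-open convention: an endpoint at the height of `q` counts as lying below the ray. -/
def EdgeCrossesRay (a b q : ℝ × ℝ) : Prop :=
  Xor (a.2 ≤ q.2) (b.2 ≤ q.2) ∧ q.1 < lineX a b q.2

open Classical in
noncomputable def edgeParity (a b q : ℝ × ℝ) : ZMod 2 :=
  if EdgeCrossesRay a b q then 1 else 0

noncomputable def belowBit (a q : ℝ × ℝ) : ZMod 2 :=
  if a.2 ≤ q.2 then 1 else 0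

noncomputable def leftBit (a b q : ℝ × ℝ) : ZMod 2 :=
  if q.1 < lineX a b q.2 then 1 else 0

theorem edgeParity_eq_mul (a b q : ℝ × ℝ) :
    edgeParity a b q = (belowBit a q + belowBit b q) * leftBit a b q := by
  unfold edgeParity EdgeCrossesRay belowBit leftBit
  by_cases ha : a.2 ≤ q.2 <;> by_cases hb : b.2 ≤ q.2 <;> by_cases hx : q.1 < lineX a b q.2 <;>
    simp [ha, hb, hx, xor_def, CharTwo.add_self_eq_zero]

theorem edgeParity_eq_zero_of_le_iff_le {a b q : ℝ × ℝ} (h : a.2 ≤ q.2 ↔ b.2 ≤ q.2) :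
    edgeParity a b q = 0 := by
  rw [edgeParity, if_neg]
  rintro ⟨hx, -⟩
  exact (xor_iff_not_iff _ _).1 hx h

theorem edgeParity_eq_zero_of_fst_le {a b q : ℝ × ℝ} (ha : a.1 ≤ q.1) (hb : b.1 ≤ q.1) :
    edgeParity a b q = 0 := by
  rw [edgeParity, if_neg]
  rintro ⟨hx, hlt⟩
  rcases mem_uIcc.1 (lineX_mem_uIcc hx) with h | h <;> linarith [h.2]

theorem edgeParity_eq_of_lt_fst {a b q : ℝ × ℝ} (ha : q.1 < a.1) (hb : q.1 < b.1) :
    edgeParity a b q = belowBit a q + belowBit b q := by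
  by_cases hx : Xor (a.2 ≤ q.2) (b.2 ≤ q.2)
  · have : q.1 < lineX a b q.2 := by
      rcases mem_uIcc.1 (lineX_mem_uIcc hx) with h | h <;> linarith [h.1]
    rw [edgeParity_eq_mul, leftBit, if_pos this, mul_one]
  · have h := (xor_iff_not_iff _ _).not_left.1 hx
    rw [edgeParity_eq_zero_of_le_iff_le h, belowBit, belowBit]
    by_cases ha : a.2 ≤ q.2 <;> simp [ha, ← h, CharTwo.add_self_eq_zero]

theorem belowBit_eventually (a q₀ : ℝ × ℝ) :
    ∀ᶠ q in 𝓝 q₀, belowBit a q = belowBit a q₀ + if a.2 = q₀.2 ∧ q.2 < q₀.2 then 1 else 0 := by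
  rcases lt_trichotomy a.2 q₀.2 with h | h | h
  · filter_upwards [(isOpen_lt continuous_const continuous_snd).mem_nhds h] with q hq
    simp [belowBit, hq.le, h.le, h.ne]
  · filter_upwards with q
    by_cases hq : q.2 < q₀.2
    · simp [belowBit, h, hq, hq.not_ge, CharTwo.add_self_eq_zero]
    · simp [belowBit, h, hq, not_lt.1 hq]
  · filter_upwards [(isOpen_lt continuous_snd continuous_const).mem_nhds h] with q hq
    simp [belowBit, not_le.2 hq, not_le.2 h, h.ne']

theorem leftBit_eventually {a b q₀ : ℝ × ℝ} (h : q₀.1 ≠ lineX a b q₀.2) :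
    ∀ᶠ q in 𝓝 q₀, leftBit a b q = leftBit a b q₀ := by
  have hc : Continuous fun q : ℝ × ℝ => lineX a b q.2 := (continuous_lineX a b).comp continuous_snd
  rcases h.lt_or_gt with h | h
  · filter_upwards [(isOpen_lt continuous_fst hc).mem_nhds h] with q hq
    simp [leftBit, hq, h]
  · filter_upwards [(isOpen_lt hc continuous_fst).mem_nhds h] with q hq
    simp [leftBit, hq.not_gt, h.not_gt]

noncomputable def vertexJump (q₀ a q : ℝ × ℝ) : ZMod 2 :=
  if a.2 = q₀.2 ∧ q₀.1 < a.1 ∧ q.2 < q₀.2 then 1 else 0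

theorem edgeParity_eventually_of_snd_eq {a b q₀ : ℝ × ℝ} (hq₀ : q₀ ∉ segment ℝ a b)
    (hab : a.2 = b.2) :
    ∀ᶠ q in 𝓝 q₀,
      edgeParity a b q = edgeParity a b q₀ + vertexJump q₀ a q + vertexJump q₀ b q := by
  have hzero (q : ℝ × ℝ) : edgeParity a b q = 0 :=
    edgeParity_eq_zero_of_le_iff_le (by rw [hab])
  have hjump (q : ℝ × ℝ) : vertexJump q₀ a q = vertexJump q₀ b q := by
    by_cases ha : a.2 = q₀.2
    · have hx : q₀.1 ∉ uIcc a.1 b.1 := fun hx =>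
        hq₀ (mk_mem_segment_of_snd_eq ha (hab ▸ ha) hx)
      simp only [vertexJump, ← hab, ← not_le, le_iff_le_of_notMem_uIcc hx]
    · simp [vertexJump, ha, ← hab]
  filter_upwards with q
  rw [hzero, hzero, hjump, add_assoc, CharTwo.add_self_eq_zero, add_zero]

theorem edgeParity_eventually_of_eq_lineX {a b q₀ : ℝ × ℝ} (hq₀ : q₀ ∉ segment ℝ a b)
    (hab : a.2 ≠ b.2) (hX : q₀.1 = lineX a b q₀.2) :
    ∀ᶠ q in 𝓝 q₀,
      edgeParity a b q = edgeParity a b q₀ + vertexJump q₀ a q + vertexJump q₀ b q := by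
  have ht : q₀.2 ∉ uIcc a.2 b.2 := fun ht =>
    hq₀ (by simpa [← hX] using mk_lineX_mem_segment hab ht)
  have hne : a.2 ≠ q₀.2 ∧ b.2 ≠ q₀.2 := by
    constructor <;> rintro h <;> exact ht (h ▸ by simp)
  have hbelow : belowBit a q₀ = belowBit b q₀ := by
    simp only [belowBit, le_iff_le_of_notMem_uIcc ht]
  filter_upwards [belowBit_eventually a q₀, belowBit_eventually b q₀] with q ha hb
  rw [edgeParity_eq_mul, edgeParity_eq_mul, ha, hb, hbelow]
  simp [vertexJump, hne, CharTwo.add_self_eq_zero]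

theorem edgeParity_eventually_of_ne_lineX {a b q₀ : ℝ × ℝ} (hab : a.2 ≠ b.2)
    (hX : q₀.1 ≠ lineX a b q₀.2) :
    ∀ᶠ q in 𝓝 q₀,
      edgeParity a b q = edgeParity a b q₀ + vertexJump q₀ a q + vertexJump q₀ b q := by
  have hleft_a (q : ℝ × ℝ) :
      (if a.2 = q₀.2 ∧ q.2 < q₀.2 then 1 else 0) * leftBit a b q₀ = vertexJump q₀ a q := by
    by_cases ha : a.2 = q₀.2
    · have hx : lineX a b q₀.2 = a.1 := ha ▸ lineX_self_left a b
      simp [vertexJump, leftBit, ha, hx, ite_and]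
    · simp [vertexJump, ha]
  have hleft_b (q : ℝ × ℝ) :
      (if b.2 = q₀.2 ∧ q.2 < q₀.2 then 1 else 0) * leftBit a b q₀ = vertexJump q₀ b q := by
    by_cases hb : b.2 = q₀.2
    · have hx : lineX a b q₀.2 = b.1 := hb ▸ lineX_self_right hab
      simp [vertexJump, leftBit, hb, hx, ite_and]
    · simp [vertexJump, hb]
  filter_upwards [belowBit_eventually a q₀, belowBit_eventually b q₀, leftBit_eventually hX]
    with q ha hb hl
  rw [edgeParity_eq_mul, edgeParity_eq_mul, ha, hb, hl, ← hleft_a q, ← hleft_b q]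
  ring

theorem edgeParity_eventually {a b q₀ : ℝ × ℝ} (hq₀ : q₀ ∉ segment ℝ a b) :
    ∀ᶠ q in 𝓝 q₀,
      edgeParity a b q = edgeParity a b q₀ + vertexJump q₀ a q + vertexJump q₀ b q := by
  by_cases hab : a.2 = b.2
  · exact edgeParity_eventually_of_snd_eq hq₀ hab
  by_cases hX : q₀.1 = lineX a b q₀.2
  · exact edgeParity_eventually_of_eq_lineX hq₀ hab hX
  · exact edgeParity_eventually_of_ne_lineX hab hX

noncomputable def rayParity (n : ℕ) [NeZero n] (v : Fin n → ℝ × ℝ) (q : ℝ × ℝ) : ZMod 2 :=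
  ∑ i : Fin n, edgeParity (v i) (v (i + 1)) q

theorem rayParity_eventually_eq {n : ℕ} [NeZero n] {v : Fin n → ℝ × ℝ} {q₀ : ℝ × ℝ}
    (hq₀ : q₀ ∉ polyBoundary n v) : ∀ᶠ q in 𝓝 q₀, rayParity n v q = rayParity n v q₀ := by
  have hedge (i : Fin n) := edgeParity_eventually fun h => hq₀ (mem_iUnion.2 ⟨i, h⟩)
  filter_upwards [eventually_all.2 hedge] with q hq
  simp only [rayParity, hq, add_assoc, Finset.sum_add_distrib (f := fun i => edgeParity _ _ q₀)]
  rw [Fin.sum_add_succ_eq_zero fun i => vertexJump q₀ (v i) q, add_zero]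

theorem rayParity_eq_zero_of_norm_lt {n : ℕ} [NeZero n] {v : Fin n → ℝ × ℝ} {C : ℝ}
    (hC : ∀ i, ‖v i‖ ≤ C) {q : ℝ × ℝ} (hq : C < ‖q‖) : rayParity n v q = 0 := by
  have h1 (i : Fin n) : |(v i).1| ≤ C := (norm_fst_le _).trans (hC i)
  have h2 (i : Fin n) : |(v i).2| ≤ C := (norm_snd_le _).trans (hC i)
  simp only [abs_le] at h1 h2
  rw [Prod.norm_def, lt_max_iff, Real.norm_eq_abs, Real.norm_eq_abs, lt_abs, lt_abs] at hq
  unfold rayParity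
  rcases hq with (hq | hq) | (hq | hq)
  · exact Finset.sum_eq_zero fun i _ =>
      edgeParity_eq_zero_of_fst_le (by linarith [h1 i]) (by linarith [h1 (i + 1)])
  · rw [Finset.sum_congr rfl fun i _ =>
      edgeParity_eq_of_lt_fst (by linarith [h1 i]) (by linarith [h1 (i + 1)])]
    exact Fin.sum_add_succ_eq_zero fun i => belowBit (v i) q
  · exact Finset.sum_eq_zero fun i _ => edgeParity_eq_zero_of_le_iff_le
      (iff_of_true (by linarith [h2 i]) (by linarith [h2 (i + 1)]))
  · exact Finset.sum_eq_zero fun i _ => edgeParity_eq_zero_of_le_iff_le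
      (iff_of_false (by linarith [h2 i]) (by linarith [h2 (i + 1)]))

theorem mem_segment_inter_rightRay_iff {a b p z : ℝ × ℝ} (ha : a ∉ rightRay p)
    (hb : b ∉ rightRay p) :
    z ∈ segment ℝ a b ∩ rightRay p ↔ EdgeCrossesRay a b p ∧ z = (lineX a b p.2, p.2) := by
  constructor
  · rintro ⟨hz, hz₂, hz₁⟩
    have hza : a ≠ z := by rintro rfl; exact ha ⟨hz₂, hz₁⟩
    have hzb : b ≠ z := by rintro rfl; exact hb ⟨hz₂, hz₁⟩
    have hopen := Prod.openSegment_subset a b (mem_openSegment_of_ne_left_right hza hzb hz)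
    have hab : a.2 ≠ b.2 := by
      intro hab
      have ha₂ : a.2 = p.2 := by simpa [hab, hz₂, eq_comm] using hopen.2
      have ha₁ : a.1 ≤ p.1 := not_lt.1 fun h => ha ⟨ha₂, h⟩
      have hb₁ : b.1 ≤ p.1 := not_lt.1 fun h => hb ⟨hab ▸ ha₂, h⟩
      have hz : z.1 ∈ uIcc a.1 b.1 :=
        segment_eq_uIcc a.1 b.1 ▸ openSegment_subset_segment ℝ _ _ hopen.1
      rcases mem_uIcc.1 hz with h | h <;> linarith [h.2]
    have hlineX : lineX a b p.2 = z.1 := hz₂ ▸ lineX_of_mem_segment hab hz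
    exact ⟨⟨xor_le_of_mem_openSegment hab (hz₂ ▸ hopen.2), hlineX ▸ hz₁⟩,
      Prod.ext hlineX.symm hz₂⟩
  · rintro ⟨hcross, rfl⟩
    exact ⟨mk_lineX_mem_segment (ne_of_xor_le hcross.1) (mem_uIcc_of_xor_le hcross.1),
      rfl, hcross.2⟩

theorem rayParity_eq_ncard {n : ℕ} [NeZero n] {v : Fin n → ℝ × ℝ} (hsimple : IsSimplePolygon n v)
    {p : ℝ × ℝ} (hvtx : ∀ i, v i ∉ rightRay p) :
    rayParity n v p = (rightRay p ∩ polyBoundary n v).ncard := by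
  classical
  set S := Finset.univ.filter fun i : Fin n => EdgeCrossesRay (v i) (v (i + 1)) p
  set φ : Fin n → ℝ × ℝ := fun i => (lineX (v i) (v (i + 1)) p.2, p.2)
  have hmem (i : Fin n) (z : ℝ × ℝ) :
      z ∈ segment ℝ (v i) (v (i + 1)) ∩ rightRay p ↔ i ∈ S ∧ z = φ i := by
    simpa [S, φ] using mem_segment_inter_rightRay_iff (hvtx i) (hvtx (i + 1))
  have himage : rightRay p ∩ polyBoundary n v = φ '' S := by
    ext z
    simp only [polyBoundary, mem_inter_iff, mem_iUnion, mem_image, Finset.mem_coe]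
    constructor
    · rintro ⟨hz, i, hi⟩
      obtain ⟨hiS, rfl⟩ := (hmem i z).1 ⟨hi, hz⟩
      exact ⟨i, hiS, rfl⟩
    · rintro ⟨i, hiS, rfl⟩
      have hφi := (hmem i _).2 ⟨hiS, rfl⟩
      exact ⟨hφi.2, i, hφi.1⟩
  have hinj : InjOn φ S := by
    intro i hi j hj hij
    by_contra hne
    have hφi := (hmem i (φ i)).2 ⟨hi, rfl⟩
    obtain ⟨k, hk⟩ := hsimple.2 i j hne ⟨hφi.1, ((hmem j (φ i)).2 ⟨hj, hij⟩).1⟩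
    exact hvtx k (hk ▸ hφi.2)
  rw [himage, hinj.ncard_image, ncard_coe_finset, rayParity]
  simp only [edgeParity, Finset.sum_boole, S]

theorem odd_ray_crossings_imp_interior_general (n : ℕ) [NeZero n]
    (v : Fin n → ℝ × ℝ)
    (hsimple : IsSimplePolygon n v) (p : ℝ × ℝ)
    (hodd : Odd (rightRay p ∩ polyBoundary n v).ncard)
    (hvtx : ∀ i : Fin n, v i ∉ rightRay p) :
    Bornology.IsBounded (connectedComponentIn (polyBoundary n v)ᶜ p) := by
  have hp : rayParity n v p = 1 := by
    rw [rayParity_eq_ncard hsimple hvtx, ZMod.natCast_eq_one_iff_odd]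
    exact hodd
  obtain ⟨C, hC⟩ := (finite_range v).isBounded.exists_norm_le
  refine Metric.isBounded_closedBall (x := 0) (r := C) |>.subset fun q hq => ?_
  have hq : rayParity n v q = 1 :=
    hp ▸ apply_eq_of_mem_connectedComponentIn (fun _ h => rayParity_eventually_eq h) hq
  by_contra hfar
  rw [mem_closedBall_zero_iff, not_le] at hfar
  rw [rayParity_eq_zero_of_norm_lt (fun i => hC _ (mem_range_self i)) hfar] at hq
  exact zero_ne_one hq

theorem odd_ray_crossings_imp_interior (n : ℕ) [NeZero n] (hn : 3 ≤ n)
    (v : Fin n → ℝ × ℝ)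
    (hsimple : IsSimplePolygon n v) (p : ℝ × ℝ)
    (hp : p ∉ polyBoundary n v)
    (hfin : (rightRay p ∩ polyBoundary n v).Finite)
    (hodd : Odd (rightRay p ∩ polyBoundary n v).ncard)
    (hvtx : ∀ i : Fin n, v i ∉ rightRay p) :
    Bornology.IsBounded (connectedComponentIn (polyBoundary n v)ᶜ p) :=
  odd_ray_crossings_imp_interior_general n v hsimple p hodd hvtx
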